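/- Let f be an accessible homeomorphism of a metric space M, and let A : M → GL(V) generate a cocycle equipped with stable and unstable holonomies H^A = (H^{A,s}, H^{A,u}). Suppose there exists a point x₀ ∈ M such that H^{A,P}_{x₀} = Id for every su-cycle P based at x₀. Then there exist B₀ ∈ GL(V) and a map C : M → GL(V) such that A(x) = C(fx) ∘ B₀ ∘ C(x)⁻¹ for all x ∈ M, and moreover H^{A,s}_{x,y} = C(y) ∘ C(x)⁻¹ for all y ∈ Wˢ(x) and H^{A,u}_{x,y} = C(y) ∘ C(x)⁻¹ for all y ∈ Wᵘ(x). -/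

import Mathlib

open Filter Topology

/-- The cocycle generated by `A : M → GL(V)` over `f`: `A⁰_x = Id` and
`Aⁿ_x = A(f^{n−1}x) ∘ ⋯ ∘ A(fx) ∘ A(x)`. -/
noncomputable def coc {M : Type*} {V : Type*} [NormedAddCommGroup V] [NormedSpace ℝ V]
    (f : M → M) (A : M → (V →L[ℝ] V)ˣ) : ℕ → M → (V →L[ℝ] V)ˣ
  | 0, _ => 1
  | n + 1, x => coc f A n (f x) * A x

/-- The stable set `Wˢ(x) = {y : dist(fⁿx, fⁿy) → 0}`. -/
def stableSet {M : Type*} [MetricSpace M] (f : M → M) (x : M) : Set M :=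
  {y | Tendsto (fun n : ℕ => dist (f^[n] x) (f^[n] y)) atTop (𝓝 0)}

/-- The unstable set `Wᵘ(x) = {y : dist(f⁻ⁿx, f⁻ⁿy) → 0}`. -/
def unstableSet {M : Type*} [MetricSpace M] (f : M ≃ₜ M) (x : M) : Set M :=
  {y | Tendsto (fun n : ℕ => dist ((⇑f.symm)^[n] x) ((⇑f.symm)^[n] y)) atTop (𝓝 0)}

/-- A stable holonomy for the cocycle generated by `A`: a family `H x y ∈ GL(V)`
(relevant for `y ∈ Wˢ(x)`) with `H x x = Id`, `H y z ∘ H x y = H x z`, and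
`H x y = (Aⁿ_y)⁻¹ ∘ H (fⁿx) (fⁿy) ∘ Aⁿ_x` for all `n`. -/
def IsStableHolonomy {M : Type*} [MetricSpace M] {V : Type*} [NormedAddCommGroup V]
    [NormedSpace ℝ V] (f : M → M) (A : M → (V →L[ℝ] V)ˣ)
    (H : M → M → (V →L[ℝ] V)ˣ) : Prop :=
  (∀ x, H x x = 1) ∧
  (∀ x y z, y ∈ stableSet f x → z ∈ stableSet f y → H y z * H x y = H x z) ∧
  (∀ x y, y ∈ stableSet f x → ∀ n : ℕ,
    H x y = (coc f A n y)⁻¹ * H (f^[n] x) (f^[n] y) * coc f A n x)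

/-- An unstable holonomy for the cocycle generated by `A`: a family `H x y ∈ GL(V)`
(relevant for `y ∈ Wᵘ(x)`) with `H x x = Id`, `H y z ∘ H x y = H x z`, and
`H x y = (A⁻ⁿ_y)⁻¹ ∘ H (f⁻ⁿx) (f⁻ⁿy) ∘ A⁻ⁿ_x` for all `n`, where
`A⁻ⁿ_x = (Aⁿ_{f⁻ⁿx})⁻¹`. -/
def IsUnstableHolonomy {M : Type*} [MetricSpace M] {V : Type*} [NormedAddCommGroup V]
    [NormedSpace ℝ V] (f : M ≃ₜ M) (A : M → (V →L[ℝ] V)ˣ)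
    (H : M → M → (V →L[ℝ] V)ˣ) : Prop :=
  (∀ x, H x x = 1) ∧
  (∀ x y z, y ∈ unstableSet f x → z ∈ unstableSet f y → H y z * H x y = H x z) ∧
  (∀ x y, y ∈ unstableSet f x → ∀ n : ℕ,
    H x y = coc (⇑f) A n ((⇑f.symm)^[n] y) * H ((⇑f.symm)^[n] x) ((⇑f.symm)^[n] y) *
      (coc (⇑f) A n ((⇑f.symm)^[n] x))⁻¹)

/-- An `su`-path starting at `x` is encoded by a list of labelled steps: step
`(true, y)` goes to `y ∈ Wˢ` of the current point, step `(false, y)` goes to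
`y ∈ Wᵘ` of the current point. `suChain f x p` says the list `p` is a valid
`su`-path starting at `x`. -/
def suChain {M : Type*} [MetricSpace M] (f : M ≃ₜ M) : M → List (Bool × M) → Prop
  | _, [] => True
  | x, (b, y) :: p => (if b then y ∈ stableSet (⇑f) x else y ∈ unstableSet f x) ∧ suChain f y p

/-- The endpoint of an `su`-path starting at `x` encoded by the list `p`. -/
def chainEnd {M : Type*} : M → List (Bool × M) → M
  | x, [] => x
  | _, (_, y) :: p => chainEnd y p

/-- The weight `H^P = H_{x_{k−1},x_k} ∘ ⋯ ∘ H_{x₀,x₁}` of an `su`-path with respect to a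
pair `(Hs, Hu)` of a stable and an unstable holonomy. -/
noncomputable def chainWeight {M : Type*} {V : Type*} [NormedAddCommGroup V]
    [NormedSpace ℝ V] (Hs Hu : M → M → (V →L[ℝ] V)ˣ) :
    M → List (Bool × M) → (V →L[ℝ] V)ˣ
  | _, [] => 1
  | x, (b, y) :: p => chainWeight Hs Hu y p * (if b then Hs x y else Hu x y)

/-!
Fix an `su`-path `P x` from `x₀` to each `x` and put `C x := H^{P x}`. Since every `su`-cycle at
`x₀` has trivial weight, any `su`-path `p` from `x` to `y` satisfies `H^p = C y * (C x)⁻¹`: close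
`P x ++ p` and `P y` up by one common path back to `x₀`. The holonomies are thus trivialised by
`C`, and their equivariance under the cocycle makes `x ↦ C(fx)⁻¹ * A x * C x` constant along
stable and unstable sets, hence constant by accessibility.
-/

section

variable {M : Type*} {V : Type*} [NormedAddCommGroup V] [NormedSpace ℝ V]

theorem chainEnd_append (x : M) (p q : List (Bool × M)) :
    chainEnd x (p ++ q) = chainEnd (chainEnd x p) q := by
  induction p generalizing x with
  | nil => rfl
  | cons a p ih => exact ih a.2

@[simp]
theorem coc_one (f : M → M) (A : M → (V →L[ℝ] V)ˣ) (x : M) : coc f A 1 x = A x := by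
  simp [coc]

theorem chainWeight_append (Hs Hu : M → M → (V →L[ℝ] V)ˣ) (x : M) (p q : List (Bool × M)) :
    chainWeight Hs Hu x (p ++ q) = chainWeight Hs Hu (chainEnd x p) q * chainWeight Hs Hu x p := by
  induction p generalizing x with
  | nil => simp [chainWeight, chainEnd]
  | cons a p ih => simp only [List.cons_append, chainWeight, chainEnd, ih, mul_assoc]

variable [MetricSpace M]

def Accessible (f : M ≃ₜ M) : Prop :=
  ∀ x y : M, ∃ p : List (Bool × M), suChain f x p ∧ chainEnd x p = y

theorem map_mem_stableSet (f : M → M) {x y : M} (h : y ∈ stableSet f x) :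
    f y ∈ stableSet f (f x) := by
  simpa only [stableSet, Set.mem_ofPred_eq, Function.iterate_succ_apply] using
    (tendsto_add_atTop_iff_nat 1).mpr h

theorem map_mem_unstableSet (f : M ≃ₜ M) {x y : M} (h : y ∈ unstableSet f x) :
    f y ∈ unstableSet f (f x) := by
  refine (tendsto_add_atTop_iff_nat 1).mp ?_
  simp only [Function.iterate_succ_apply, Homeomorph.symm_apply_apply]
  exact h

theorem suChain_append (f : M ≃ₜ M) {x : M} {p q : List (Bool × M)} (hp : suChain f x p)
    (hq : suChain f (chainEnd x p) q) : suChain f x (p ++ q) := by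
  induction p generalizing x with
  | nil => exact hq
  | cons a p ih => exact ⟨hp.1, ih hp.2 hq⟩

theorem eq_of_suChain {β : Type*} (f : M ≃ₜ M) (D : M → β)
    (hs : ∀ x y, y ∈ stableSet f x → D y = D x) (hu : ∀ x y, y ∈ unstableSet f x → D y = D x)
    {x : M} {p : List (Bool × M)} (hp : suChain f x p) : D (chainEnd x p) = D x := by
  induction p generalizing x with
  | nil => rfl
  | cons a p ih =>
    obtain ⟨b, y⟩ := a
    refine (ih hp.2).trans ?_
    cases b
    · exact hu x y hp.1
    · exact hs x y hp.1

theorem Accessible.eq_of_forall_stableSet_unstableSet {β : Type*} {f : M ≃ₜ M}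
    (hacc : Accessible f) {D : M → β}
    (hs : ∀ x y, y ∈ stableSet f x → D y = D x) (hu : ∀ x y, y ∈ unstableSet f x → D y = D x)
    (x y : M) : D y = D x := by
  obtain ⟨p, hp, rfl⟩ := hacc x y
  exact eq_of_suChain f D hs hu hp

theorem IsStableHolonomy.map_eq {f : M → M} {A : M → (V →L[ℝ] V)ˣ} {H : M → M → (V →L[ℝ] V)ˣ}
    (hH : IsStableHolonomy f A H) {x y : M} (h : y ∈ stableSet f x) :
    H (f x) (f y) = A y * H x y * (A x)⁻¹ := by
  rw [hH.2.2 x y h 1]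
  simp only [coc_one, Function.iterate_one]
  group

theorem IsUnstableHolonomy.map_eq {f : M ≃ₜ M} {A : M → (V →L[ℝ] V)ˣ}
    {H : M → M → (V →L[ℝ] V)ˣ} (hH : IsUnstableHolonomy f A H) {x y : M}
    (h : y ∈ unstableSet f x) : H (f x) (f y) = A y * H x y * (A x)⁻¹ := by
  simpa only [coc_one, Function.iterate_one, Homeomorph.symm_apply_apply] using
    hH.2.2 (f x) (f y) (map_mem_unstableSet f h) 1

theorem Accessible.exists_chainWeight_eq_mul_inv {f : M ≃ₜ M} (hacc : Accessible f)
    (Hs Hu : M → M → (V →L[ℝ] V)ˣ) (x₀ : M)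
    (hcyc : ∀ p : List (Bool × M), suChain f x₀ p → chainEnd x₀ p = x₀ →
      chainWeight Hs Hu x₀ p = 1) :
    ∃ C : M → (V →L[ℝ] V)ˣ, ∀ x p, suChain f x p →
      chainWeight Hs Hu x p = C (chainEnd x p) * (C x)⁻¹ := by
  choose P hP hPend using hacc x₀
  choose Q hQ hQend using fun x => hacc x x₀
  refine ⟨fun x => chainWeight Hs Hu x₀ (P x), fun x p hp => ?_⟩
  set y := chainEnd x p
  have hPy : chainWeight Hs Hu y (Q y) * chainWeight Hs Hu x₀ (P y) = 1 := by
    have := hcyc (P y ++ Q y) (suChain_append f (hP y) (by rw [hPend]; exact hQ y))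
      (by rw [chainEnd_append, hPend, hQend])
    rwa [chainWeight_append, hPend] at this
  have hPxp : chainWeight Hs Hu y (Q y) * (chainWeight Hs Hu x p *
      chainWeight Hs Hu x₀ (P x)) = 1 := by
    have hpath : suChain f x₀ (P x ++ p) := suChain_append f (hP x) (by rwa [hPend])
    have hend : chainEnd x₀ (P x ++ p) = y := by rw [chainEnd_append, hPend]
    have := hcyc (P x ++ p ++ Q y) (suChain_append f hpath (by rw [hend]; exact hQ y))
      (by rw [chainEnd_append, hend, hQend])
    rwa [chainWeight_append, hend, chainWeight_append, hPend] at this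
  rw [eq_mul_inv_iff_mul_eq]
  exact mul_left_cancel (hPxp.trans hPy.symm)

theorem IsStableHolonomy.conj_eq_of_mem {f : M → M} {A : M → (V →L[ℝ] V)ˣ}
    {H : M → M → (V →L[ℝ] V)ˣ} (hH : IsStableHolonomy f A H) {C : M → (V →L[ℝ] V)ˣ}
    (hC : ∀ x y, y ∈ stableSet f x → H x y = C y * (C x)⁻¹) {x y : M}
    (h : y ∈ stableSet f x) : (C (f y))⁻¹ * A y * C y = (C (f x))⁻¹ * A x * C x := by
  have hmap := hH.map_eq h
  rw [hC x y h, hC (f x) (f y) (map_mem_stableSet f h)] at hmap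
  rw [mul_inv_eq_iff_eq_mul.mp hmap]
  group

theorem IsUnstableHolonomy.conj_eq_of_mem {f : M ≃ₜ M} {A : M → (V →L[ℝ] V)ˣ}
    {H : M → M → (V →L[ℝ] V)ˣ} (hH : IsUnstableHolonomy f A H) {C : M → (V →L[ℝ] V)ˣ}
    (hC : ∀ x y, y ∈ unstableSet f x → H x y = C y * (C x)⁻¹) {x y : M}
    (h : y ∈ unstableSet f x) : (C (f y))⁻¹ * A y * C y = (C (f x))⁻¹ * A x * C x := by
  have hmap := hH.map_eq h
  rw [hC x y h, hC (f x) (f y) (map_mem_unstableSet f h)] at hmap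
  rw [mul_inv_eq_iff_eq_mul.mp hmap]
  group

end

theorem stmt_13_general {V : Type*} [NormedAddCommGroup V] [NormedSpace ℝ V]
    {M : Type*} [MetricSpace M] (f : M ≃ₜ M) (A : M → (V →L[ℝ] V)ˣ)
    (HAs HAu : M → M → (V →L[ℝ] V)ˣ)
    (hHAs : IsStableHolonomy (⇑f) A HAs) (hHAu : IsUnstableHolonomy f A HAu)
    (hacc : ∀ x y : M, ∃ p : List (Bool × M), suChain f x p ∧ chainEnd x p = y)
    (x₀ : M)
    (hcyc : ∀ p : List (Bool × M), suChain f x₀ p → chainEnd x₀ p = x₀ →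
      chainWeight HAs HAu x₀ p = 1) :
    ∃ (B₀ : (V →L[ℝ] V)ˣ) (C : M → (V →L[ℝ] V)ˣ),
      (∀ x : M, A x = C (f x) * B₀ * (C x)⁻¹) ∧
      (∀ x y : M, y ∈ stableSet (⇑f) x → HAs x y = C y * (C x)⁻¹) ∧
      (∀ x y : M, y ∈ unstableSet f x → HAu x y = C y * (C x)⁻¹) := by
  have hacc : Accessible f := hacc
  obtain ⟨C, hC⟩ := hacc.exists_chainWeight_eq_mul_inv HAs HAu x₀ hcyc
  have hCs : ∀ x y, y ∈ stableSet f x → HAs x y = C y * (C x)⁻¹ := fun x y h => by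
    simpa [chainWeight, chainEnd] using hC x [(true, y)] ⟨h, trivial⟩
  have hCu : ∀ x y, y ∈ unstableSet f x → HAu x y = C y * (C x)⁻¹ := fun x y h => by
    simpa [chainWeight, chainEnd] using hC x [(false, y)] ⟨h, trivial⟩
  have hconst := hacc.eq_of_forall_stableSet_unstableSet (D := fun x => (C (f x))⁻¹ * A x * C x)
    (fun _ _ h => hHAs.conj_eq_of_mem hCs h) (fun _ _ h => hHAu.conj_eq_of_mem hCu h) x₀
  refine ⟨(C (f x₀))⁻¹ * A x₀ * C x₀, C, fun x => ?_, hCs, hCu⟩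
  rw [← hconst x]
  group

/-- Corollary 4.10: if a cocycle `A` over an accessible `f` has holonomies
`H^A = (H^{A,s}, H^{A,u})` all of whose `su`-cycle weights at some point `x₀` are
trivial, then `A` is continuously cohomologous to a constant cocycle `B₀` via a
conjugacy `C` that intertwines `H^A` with the trivial holonomies of `B₀`, i.e.
`H^A_{x,y} = C(y) ∘ C(x)⁻¹`. -/
theorem stmt_13 {V : Type*} [NormedAddCommGroup V] [NormedSpace ℝ V] [CompleteSpace V]
    {M : Type*} [MetricSpace M] (f : M ≃ₜ M) (A : M → (V →L[ℝ] V)ˣ)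
    (HAs HAu : M → M → (V →L[ℝ] V)ˣ)
    (hHAs : IsStableHolonomy (⇑f) A HAs) (hHAu : IsUnstableHolonomy f A HAu)
    (hacc : ∀ x y : M, ∃ p : List (Bool × M), suChain f x p ∧ chainEnd x p = y)
    (x₀ : M)
    (hcyc : ∀ p : List (Bool × M), suChain f x₀ p → chainEnd x₀ p = x₀ →
      chainWeight HAs HAu x₀ p = 1) :
    ∃ (B₀ : (V →L[ℝ] V)ˣ) (C : M → (V →L[ℝ] V)ˣ),
      (∀ x : M, A x = C (f x) * B₀ * (C x)⁻¹) ∧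
      (∀ x y : M, y ∈ stableSet (⇑f) x → HAs x y = C y * (C x)⁻¹) ∧
      (∀ x y : M, y ∈ unstableSet f x → HAu x y = C y * (C x)⁻¹) :=
  stmt_13_general f A HAs HAu hHAs hHAu hacc x₀ hcyc
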